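/- arXiv:1308.1117 — 3 statements merged into one kernel-verified Lean document; each statement's English description precedes it below -/
import Mathlib

section
/- Let H be a complex Hilbert space, (φ_j)_{j∈ℕ} an orthonormal sequence in H, and A a bounded linear operator on H. If the sequence of diagonal matrix elements ⟨A φ_j, φ_j⟩ converges to a limit L ∈ ℂ, then |L| ≤ inf { ‖A + K‖ : K a compact operator on H }, i.e. any weak limit of the matrix elements is bounded by the essential norm of A. -/
/-!
Compactness of `K` gives, along a subsequence of any subsequence, `K (φ j) → y`; then
`⟪φ j, K (φ j)⟫ = ⟪φ j, K (φ j) - y⟫ + ⟪φ j, y⟫ → 0`, the first term by Cauchy–Schwarz and the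
second by Bessel's inequality. So the diagonal matrix elements of `A + K` still converge to `L`,
and each of them is bounded by `‖A + K‖`.
-/

open scoped ComplexInnerProductSpace InnerProductSpace
open Filter

section

variable {𝕜 H : Type*} [RCLike 𝕜] [NormedAddCommGroup H] [InnerProductSpace 𝕜 H]

theorem Orthonormal.tendsto_inner_zero {φ : ℕ → H} (hφ : Orthonormal 𝕜 φ) (x : H) :
    Tendsto (fun j => ⟪φ j, x⟫_𝕜) atTop (nhds 0) := by
  have hsq : Tendsto (fun j => ‖⟪φ j, x⟫_𝕜‖ ^ 2) atTop (nhds 0) :=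
    (hφ.inner_products_summable x).tendsto_atTop_zero
  rw [tendsto_zero_iff_norm_tendsto_zero]
  simpa only [Real.sqrt_sq (norm_nonneg _), Real.sqrt_zero] using hsq.sqrt

theorem norm_inner_apply_le_opNorm_of_norm_eq_one (T : H →L[𝕜] H) {x : H} (hx : ‖x‖ = 1) :
    ‖⟪x, T x⟫_𝕜‖ ≤ ‖T‖ :=
  calc ‖⟪x, T x⟫_𝕜‖ ≤ ‖x‖ * ‖T x‖ := norm_inner_le_norm _ _
    _ ≤ ‖x‖ * (‖T‖ * ‖x‖) := by gcongr; exact T.le_opNorm x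
    _ = ‖T‖ := by rw [hx]; ring

theorem IsCompactOperator.tendsto_inner_orthonormal_zero {K : H →L[𝕜] H}
    (hK : IsCompactOperator K) {φ : ℕ → H} (hφ : Orthonormal 𝕜 φ) :
    Tendsto (fun j => ⟪φ j, K (φ j)⟫_𝕜) atTop (nhds 0) := by
  have hcomp : IsCompact (closure (K '' Metric.closedBall 0 1)) :=
    (isCompactOperator_iff_isCompact_closure_image_closedBall (K : H →ₗ[𝕜] H) one_pos).mp hK
  refine tendsto_of_subseq_tendsto fun ns hns => ?_
  have hmem : ∀ n, K (φ (ns n)) ∈ closure (K '' Metric.closedBall 0 1) := fun n =>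
    subset_closure ⟨φ (ns n), by simp [hφ.1 (ns n)], rfl⟩
  obtain ⟨y, -, ms, hms, hy⟩ := hcomp.tendsto_subseq hmem
  refine ⟨ms, ?_⟩
  set ψ := fun n => φ (ns (ms n))
  have hψ : ∀ n, ‖ψ n‖ = 1 := fun n => hφ.1 _
  have hdist : Tendsto (fun n => ‖K (ψ n) - y‖) atTop (nhds 0) :=
    tendsto_iff_norm_sub_tendsto_zero.mp hy
  have hnear : Tendsto (fun n => ⟪ψ n, K (ψ n) - y⟫_𝕜) atTop (nhds 0) := by
    rw [tendsto_zero_iff_norm_tendsto_zero]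
    refine squeeze_zero (fun n => norm_nonneg _) (fun n => ?_) hdist
    simpa only [hψ, one_mul] using norm_inner_le_norm (𝕜 := 𝕜) (ψ n) (K (ψ n) - y)
  have hweak : Tendsto (fun n => ⟪ψ n, y⟫_𝕜) atTop (nhds 0) :=
    (hφ.tendsto_inner_zero y).comp (hns.comp hms.tendsto_atTop)
  simpa only [← inner_add_right, sub_add_cancel, add_zero] using hnear.add hweak

end

theorem stmt_1_general {H : Type*} [NormedAddCommGroup H] [InnerProductSpace ℂ H]
    (φ : ℕ → H) (hφ : Orthonormal ℂ φ)
    (A : H →L[ℂ] H) (L : ℂ)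
    (hconv : Tendsto (fun j => ⟪φ j, A (φ j)⟫) atTop (nhds L)) :
    ‖L‖ ≤ sInf {x : ℝ | ∃ K : H →L[ℂ] H, IsCompactOperator (⇑K) ∧ x = ‖A + K‖} := by
  refine le_csInf ⟨‖A + 0‖, 0, isCompactOperator_zero, rfl⟩ ?_
  rintro _ ⟨K, hK, rfl⟩
  have hperturbed : Tendsto (fun j => ⟪φ j, (A + K) (φ j)⟫) atTop (nhds L) := by
    simpa only [add_apply, inner_add_right, add_zero] using
      hconv.add (hK.tendsto_inner_orthonormal_zero hφ)
  exact le_of_tendsto hperturbed.norm (Eventually.of_forall fun j =>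
    norm_inner_apply_le_opNorm_of_norm_eq_one (A + K) (hφ.1 j))

/-- If `(φ j)` is an orthonormal sequence in a complex Hilbert space `H`, `A` is a bounded
operator on `H`, and the diagonal matrix elements `⟨A φ_j, φ_j⟩` converge to `L`, then
`|L|` is bounded by the essential norm `inf { ‖A + K‖ : K compact }` of `A`. -/
theorem stmt_1 {H : Type*} [NormedAddCommGroup H] [InnerProductSpace ℂ H] [CompleteSpace H]
    (φ : ℕ → H) (hφ : Orthonormal ℂ φ)
    (A : H →L[ℂ] H) (L : ℂ)
    (hconv : Tendsto (fun j => ⟪φ j, A (φ j)⟫) atTop (nhds L)) :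
    ‖L‖ ≤ sInf {x : ℝ | ∃ K : H →L[ℂ] H, IsCompactOperator (⇑K) ∧ x = ‖A + K‖} :=
  stmt_1_general φ hφ A L hconv
end

section
/- Let H be a complex Hilbert space, U a unitary operator on H, (φ_j)_{j∈ℕ} a sequence of unit eigenvectors of U, and F a bounded operator on H. Suppose that for every nonzero integer p, lim_{N→∞} (1/N) ∑_{j=1}^{N} ⟨U^{−p} F* U^{p} F φ_j, φ_j⟩ = 0. Then lim_{N→∞} (1/N) ∑_{j=1}^{N} |⟨F φ_j, φ_j⟩|² = 0. (This is the abstract operator-theoretic core of the almost-orthogonality results: when the canonical relation of F almost nowhere commutes with the flow, the averaged autocorrelations vanish and hence the variance of the diagonal matrix elements tends to zero.) -/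
/-!
At an eigenvector `φ` of the unitary `U` the eigenvalue has modulus one, so the matrix element
`⟨X φ, φ⟩` is unchanged when `X` is conjugated by a power of `U`. For the orbit sum
`G = ∑_{p=1}^M U^{-p} F U^p` this gives `M ⟨F φ, φ⟩ = ⟨G φ, φ⟩`, and Cauchy–Schwarz yields
`M² |⟨F φ, φ⟩|² ≤ ⟨G* G φ, φ⟩`. Expanding `G* G`, each term `⟨(U^{-p} F U^p)* U^{-q} F U^q φ, φ⟩`
equals the autocorrelation `⟨U^{-(p-q)} F* U^{p-q} F φ, φ⟩`. Averaging over `j`, the `M` diagonal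
terms contribute at most `M ‖F‖²` and the off-diagonal ones vanish as `N → ∞`, so the variance is
eventually below `‖F‖²/M + ε` for every `M`.
-/

open scoped ComplexInnerProductSpace InnerProductSpace
open Filter Finset

theorem RCLike.re_cesaro {𝕜 : Type*} [RCLike 𝕜] (z : ℕ → 𝕜) (N : ℕ) :
    re ((1 / (N : 𝕜)) * ∑ j ∈ Icc 1 N, z j) = (1 / (N : ℝ)) * ∑ j ∈ Icc 1 N, re (z j) := by
  rw [← map_sum, ← re_ofReal_mul]
  push_cast
  rfl

theorem cesaro_le_of_le {a : ℕ → ℝ} {C : ℝ} (hC : 0 ≤ C) (ha : ∀ j, a j ≤ C) (N : ℕ) :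
    (1 / (N : ℝ)) * ∑ j ∈ Icc 1 N, a j ≤ C := by
  calc (1 / (N : ℝ)) * ∑ j ∈ Icc 1 N, a j ≤ (1 / (N : ℝ)) * (N * C) := by
        gcongr
        simpa using sum_le_card_nsmul (Icc 1 N) a C fun j _ => ha j
    _ ≤ C := by
        rcases N.eq_zero_or_pos with rfl | hN
        · simpa using hC
        · field_simp; rfl

theorem Finset.sum_sum_le_card_mul_add_sum_sum_ite {α : Type*} [DecidableEq α] (s : Finset α)
    (f : α → α → ℝ) {C : ℝ} (hdiag : ∀ p ∈ s, f p p ≤ C) :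
    ∑ p ∈ s, ∑ q ∈ s, f p q ≤ #s * C + ∑ p ∈ s, ∑ q ∈ s, if p = q then 0 else f p q := by
  have hsplit : ∀ p ∈ s, ∀ q ∈ s,
      f p q ≤ (if p = q then C else 0) + if p = q then 0 else f p q := by
    intro p hp q _
    split_ifs with h
    · subst h; simpa using hdiag p hp
    · simp
  calc ∑ p ∈ s, ∑ q ∈ s, f p q
      ≤ ∑ p ∈ s, ∑ q ∈ s, ((if p = q then C else 0) + if p = q then 0 else f p q) :=
        sum_le_sum fun p hp => sum_le_sum fun q hq => hsplit p hp q hq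
    _ = #s * C + ∑ p ∈ s, ∑ q ∈ s, if p = q then 0 else f p q := by
        simp [sum_add_distrib, sum_ite_eq]

theorem tendsto_nhds_zero_of_le_div_add {ι : Type*} {l : Filter ι} {a : ι → ℝ} (C : ℝ)
    (ha : ∀ i, 0 ≤ a i)
    (h : ∀ M : ℕ, 0 < M → ∃ b : ι → ℝ, Tendsto b l (nhds 0) ∧ ∀ i, a i ≤ C / M + b i) :
    Tendsto a l (nhds 0) := by
  refine tendsto_order.2
    ⟨fun ε hε => Eventually.of_forall fun i => hε.trans_le (ha i), fun ε hε => ?_⟩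
  obtain ⟨M, hCM, hM⟩ := (((tendsto_const_div_atTop_nhds_zero_nat C).eventually
    (gt_mem_nhds (half_pos hε))).and (eventually_gt_atTop 0)).exists
  obtain ⟨b, hb, hab⟩ := h M hM
  filter_upwards [hb.eventually (gt_mem_nhds (half_pos hε))] with i hi
  linarith [hab i]

namespace Unitary

section StarMonoid

variable {R : Type*} [Monoid R] [StarMul R]

def orbitConj (U : unitary R) (p : ℤ) (x : R) : R := ↑(U ^ (-p)) * x * ↑(U ^ p)

def autocorrelation (U : unitary R) (x : R) (r : ℤ) : R := orbitConj U r (star x) * x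

variable (U : unitary R)

theorem star_coe_zpow (p : ℤ) : star (↑(U ^ p) : R) = ↑(U ^ (-p)) := by
  rw [← coe_star, star_eq_inv, zpow_neg]

theorem coe_zpow_mul_coe_zpow (p q : ℤ) : (↑(U ^ p) * ↑(U ^ q) : R) = ↑(U ^ (p + q)) := by
  rw [zpow_add, Submonoid.coe_mul]

theorem orbitConj_zero (x : R) : orbitConj U 0 x = x := by
  simp [orbitConj]

theorem star_orbitConj (p : ℤ) (x : R) : star (orbitConj U p x) = orbitConj U p (star x) := by
  simp only [orbitConj, star_mul, star_coe_zpow, neg_neg, mul_assoc]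

theorem orbitConj_mul (p : ℤ) (x y : R) :
    orbitConj U p (x * y) = orbitConj U p x * orbitConj U p y := by
  simp only [orbitConj, mul_assoc, ← mul_assoc (↑(U ^ p) : R) (↑(U ^ (-p))),
    coe_zpow_mul_coe_zpow, add_neg_cancel, zpow_zero, OneMemClass.coe_one, one_mul]

theorem orbitConj_orbitConj (p q : ℤ) (x : R) :
    orbitConj U p (orbitConj U q x) = orbitConj U (p + q) x := by
  simp only [orbitConj, mul_assoc, ← mul_assoc (↑(U ^ (-p)) : R),
    coe_zpow_mul_coe_zpow, neg_add, add_comm q]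

theorem star_orbitConj_mul_orbitConj (x : R) (p q : ℤ) :
    star (orbitConj U p x) * orbitConj U q x = orbitConj U q (autocorrelation U x (p - q)) := by
  rw [star_orbitConj, autocorrelation, orbitConj_mul, orbitConj_orbitConj, add_sub_cancel]

end StarMonoid

section Hilbert

variable {𝕜 H : Type*} [RCLike 𝕜] [NormedAddCommGroup H] [InnerProductSpace 𝕜 H]
  [CompleteSpace H] (U : unitary (H →L[𝕜] H)) {φ : H} {c : 𝕜}

theorem autocorrelation_eq_comp (F : H →L[𝕜] H) (r : ℤ) :
    autocorrelation U F r = ↑(U ^ (-r)) ∘L ContinuousLinearMap.adjoint F ∘L ↑(U ^ r) ∘L F :=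
  rfl

theorem norm_eq_one_of_apply_eq_smul (hφ : (U : H →L[𝕜] H) φ = c • φ) (hφ0 : φ ≠ 0) :
    ‖c‖ = 1 := by
  have h := norm_map U φ
  rw [hφ, norm_smul] at h
  exact (mul_eq_right₀ (norm_ne_zero_iff.mpr hφ0)).mp h

theorem zpow_apply_eq_zpow_smul (hφ : (U : H →L[𝕜] H) φ = c • φ) (hc : c ≠ 0) (p : ℤ) :
    (↑(U ^ p) : H →L[𝕜] H) φ = c ^ p • φ := by
  have hinv : (↑U⁻¹ : H →L[𝕜] H) φ = c⁻¹ • φ := by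
    rw [eq_inv_smul_iff₀ hc, ← map_smul, ← hφ, ← mul_apply_eq_comp, ← Submonoid.coe_mul,
      inv_mul_cancel]
    rfl
  induction p using Int.induction_on with
  | zero => simp
  | succ n ih =>
    rw [zpow_add_one, Submonoid.coe_mul, mul_apply_eq_comp, hφ, map_smul, ih, smul_smul,
      zpow_add_one₀ hc, mul_comm]
  | pred n ih =>
    rw [zpow_sub_one, Submonoid.coe_mul, mul_apply_eq_comp, hinv, map_smul, ih, smul_smul,
      zpow_sub_one₀ hc, mul_comm]

theorem inner_orbitConj_apply_self (hφ : (U : H →L[𝕜] H) φ = c • φ) (hφ0 : φ ≠ 0) (p : ℤ)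
    (X : H →L[𝕜] H) : ⟪φ, orbitConj U p X φ⟫_𝕜 = ⟪φ, X φ⟫_𝕜 := by
  have hc : ‖c‖ = 1 := norm_eq_one_of_apply_eq_smul U hφ hφ0
  have hmove (y : H) :
      ⟪φ, (↑(U ^ (-p)) : H →L[𝕜] H) y⟫_𝕜 = ⟪(↑(U ^ p) : H →L[𝕜] H) φ, y⟫_𝕜 := by
    rw [← inner_map_map (U ^ p), ← mul_apply_eq_comp, coe_zpow_mul_coe_zpow, add_neg_cancel,
      zpow_zero]
    rfl
  have hcp : starRingEnd 𝕜 (c ^ p) * c ^ p = 1 := by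
    rw [RCLike.conj_mul, norm_zpow, hc, one_zpow]; simp
  rw [orbitConj, mul_apply_eq_comp, mul_apply_eq_comp, hmove,
    zpow_apply_eq_zpow_smul U hφ (ne_zero_of_norm_ne_zero (hc ▸ one_ne_zero)) p, map_smul,
    inner_smul_left, inner_smul_right, ← mul_assoc, hcp, one_mul]

theorem sq_norm_inner_apply_self_le (X : H →L[𝕜] H) (φ : H) :
    ‖⟪φ, X φ⟫_𝕜‖ ^ 2 ≤ ‖φ‖ ^ 2 * RCLike.re ⟪φ, (star X * X) φ⟫_𝕜 := by
  rw [ContinuousLinearMap.star_eq_adjoint, ContinuousLinearMap.mul_def,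
    ← ContinuousLinearMap.apply_norm_sq_eq_inner_adjoint_right, ← mul_pow]
  gcongr
  exact norm_inner_le_norm φ (X φ)

theorem card_sq_mul_sq_norm_inner_le_sum_autocorrelation (F : H →L[𝕜] H)
    (hφ : (U : H →L[𝕜] H) φ = c • φ) (hφ1 : ‖φ‖ = 1) (s : Finset ℤ) :
    (#s : ℝ) ^ 2 * ‖⟪φ, F φ⟫_𝕜‖ ^ 2 ≤
      ∑ p ∈ s, ∑ q ∈ s, RCLike.re ⟪φ, autocorrelation U F (p - q) φ⟫_𝕜 := by
  have hφ0 : φ ≠ 0 := norm_ne_zero_iff.mp (hφ1 ▸ one_ne_zero)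
  set G := ∑ p ∈ s, orbitConj U p F
  have hG : ⟪φ, G φ⟫_𝕜 = #s • ⟪φ, F φ⟫_𝕜 := by
    simp only [G, _root_.sum_apply, inner_sum, inner_orbitConj_apply_self U hφ hφ0, sum_const]
  have hGG : ⟪φ, (star G * G) φ⟫_𝕜 =
      ∑ p ∈ s, ∑ q ∈ s, ⟪φ, autocorrelation U F (p - q) φ⟫_𝕜 := by
    simp only [G, star_sum, sum_mul_sum, star_orbitConj_mul_orbitConj, _root_.sum_apply,
      inner_sum, inner_orbitConj_apply_self U hφ hφ0]
  have := sq_norm_inner_apply_self_le G φ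
  rwa [hG, hGG, hφ1, one_pow, one_mul, nsmul_eq_mul, norm_mul, mul_pow, RCLike.norm_natCast,
    map_sum, sum_congr rfl fun p _ => map_sum _ _ _] at this

theorem re_inner_autocorrelation_zero_le (F : H →L[𝕜] H) (φ : H) :
    RCLike.re ⟪φ, autocorrelation U F 0 φ⟫_𝕜 ≤ ‖F‖ ^ 2 * ‖φ‖ ^ 2 := by
  rw [autocorrelation, orbitConj_zero, ContinuousLinearMap.star_eq_adjoint,
    ContinuousLinearMap.mul_def, ← ContinuousLinearMap.apply_norm_sq_eq_inner_adjoint_right,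
    ← mul_pow]
  gcongr
  exact F.le_opNorm φ

theorem card_sq_mul_cesaro_le_sum_cesaro_autocorrelation (F : H →L[𝕜] H) {φ : ℕ → H}
    (hφ1 : ∀ j, ‖φ j‖ = 1) {c : ℕ → 𝕜} (hφ : ∀ j, (U : H →L[𝕜] H) (φ j) = c j • φ j)
    (s : Finset ℤ) (N : ℕ) :
    (#s : ℝ) ^ 2 * ((1 / (N : ℝ)) * ∑ j ∈ Icc 1 N, ‖⟪φ j, F (φ j)⟫_𝕜‖ ^ 2) ≤
      ∑ p ∈ s, ∑ q ∈ s, RCLike.re ((1 / (N : 𝕜)) *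
        ∑ j ∈ Icc 1 N, ⟪φ j, autocorrelation U F (p - q) (φ j)⟫_𝕜) := by
  calc (#s : ℝ) ^ 2 * ((1 / (N : ℝ)) * ∑ j ∈ Icc 1 N, ‖⟪φ j, F (φ j)⟫_𝕜‖ ^ 2)
      = (1 / (N : ℝ)) * ∑ j ∈ Icc 1 N, (#s : ℝ) ^ 2 * ‖⟪φ j, F (φ j)⟫_𝕜‖ ^ 2 := by
        rw [mul_left_comm, mul_sum]
    _ ≤ (1 / (N : ℝ)) * ∑ j ∈ Icc 1 N,
          ∑ p ∈ s, ∑ q ∈ s, RCLike.re ⟪φ j, autocorrelation U F (p - q) (φ j)⟫_𝕜 := by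
        gcongr with j
        exact card_sq_mul_sq_norm_inner_le_sum_autocorrelation U F (hφ j) (hφ1 j) s
    _ = _ := by
        simp only [RCLike.re_cesaro]
        simp only [mul_sum]
        rw [sum_comm]
        exact sum_congr rfl fun p _ => sum_comm

end Hilbert

end Unitary

open Unitary

/-- Abstract almost-orthogonality: if `(φ j)` is a sequence of unit eigenvectors of a
unitary `U` and `F` is a bounded operator such that for every nonzero integer `p` the Cesàro
averages of the autocorrelation matrix elements `⟨U^{-p} F* U^{p} F φ_j, φ_j⟩` tend to `0`,
then the variance `(1/N) ∑_{j=1}^{N} |⟨F φ_j, φ_j⟩|²` tends to `0`. -/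
theorem stmt_7 {H : Type*} [NormedAddCommGroup H] [InnerProductSpace ℂ H] [CompleteSpace H]
    (U : unitary (H →L[ℂ] H)) (φ : ℕ → H) (hnorm : ∀ j, ‖φ j‖ = 1)
    (c : ℕ → ℂ) (heig : ∀ j, (↑U : H →L[ℂ] H) (φ j) = c j • φ j)
    (F : H →L[ℂ] H)
    (hcorr : ∀ p : ℤ, p ≠ 0 →
      Tendsto (fun N : ℕ => (1 / (N : ℂ)) *
          ∑ j ∈ Finset.Icc 1 N,
            ⟪φ j, ((↑(U ^ (-p)) : H →L[ℂ] H) ∘L ContinuousLinearMap.adjoint F ∘L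
                  (↑(U ^ p) : H →L[ℂ] H) ∘L F) (φ j)⟫)
        atTop (nhds 0)) :
    Tendsto (fun N : ℕ => (1 / (N : ℝ)) * ∑ j ∈ Finset.Icc 1 N, ‖⟪φ j, F (φ j)⟫‖ ^ 2)
      atTop (nhds 0) := by
  simp_rw [← autocorrelation_eq_comp] at hcorr
  set corr : ℤ → ℕ → ℝ := fun r N =>
    RCLike.re ((1 / (N : ℂ)) * ∑ j ∈ Icc 1 N, ⟪φ j, autocorrelation U F r (φ j)⟫)
  have hcorr_re (r : ℤ) (hr : r ≠ 0) : Tendsto (corr r) atTop (nhds 0) := by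
    have := (RCLike.continuous_re.tendsto 0).comp (hcorr r hr)
    rwa [map_zero] at this
  have hdiag (N : ℕ) : corr 0 N ≤ ‖F‖ ^ 2 := by
    simp only [corr, RCLike.re_cesaro]
    refine cesaro_le_of_le (by positivity) (fun j => ?_) N
    simpa [hnorm j] using re_inner_autocorrelation_zero_le U F (φ j)
  refine tendsto_nhds_zero_of_le_div_add (‖F‖ ^ 2) (fun N => by positivity) fun M hM =>
    ⟨fun N => (∑ p ∈ Icc 1 (M : ℤ), ∑ q ∈ Icc 1 (M : ℤ),
      if p = q then 0 else corr (p - q) N) / (M : ℝ) ^ 2, ?_, fun N => ?_⟩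
  · have hterm (p q : ℤ) :
        Tendsto (fun N => if p = q then 0 else corr (p - q) N) atTop (nhds 0) := by
      split_ifs with h
      exacts [tendsto_const_nhds, hcorr_re _ (sub_ne_zero.mpr h)]
    simpa using (tendsto_finsetSum _ fun p _ => tendsto_finsetSum _ fun q _ =>
      hterm p q).div_const ((M : ℝ) ^ 2)
  · have hsplit := (card_sq_mul_cesaro_le_sum_cesaro_autocorrelation U F hnorm heig
      (Icc 1 M) N).trans (sum_sum_le_card_mul_add_sum_sum_ite _ _ (C := ‖F‖ ^ 2) fun p _ => by
        rw [sub_self]; exact hdiag N)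
    rw [Int.card_Icc, add_sub_cancel_right, Int.toNat_natCast] at hsplit
    rw [div_add_div _ _ (by positivity) (by positivity), le_div_iff₀ (by positivity)]
    linarith [mul_le_mul_of_nonneg_left hsplit (Nat.cast_nonneg (α := ℝ) M)]
end

section
/- Let X be a compact metric space, μ a finite nonnegative Borel measure on X, and ν a finite signed Borel measure on X. Suppose that for every continuous function f : X → ℝ, (∫_X f dν)² ≤ ∫_X f² dμ. Then ν is absolutely continuous with respect to μ, i.e. the total variation |ν| vanishes on every μ-null Borel set. (This is the mechanism by which the limit measures ν_k of the Hecke matrix elements are shown to be absolutely continuous with respect to the quantum limit μ.) -/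
/-!
Write `ν = p - n` for the Jordan decomposition. Testing the hypothesis on the thickened indicators
of a closed set `K`, which are continuous, bounded by `1` and decrease to the indicator of `K`,
gives `(p K - n K)² ≤ μ K` in the limit. Hence `p` vanishes on every closed set that is null for
both `μ` and `n`, and by inner regularity on every such Borel set. As `p ⟂ n`, a `μ`-null set
splits into a part where `p` vanishes and a part where `n` vanishes, so `p` is null on it;
symmetrically for `n`.
-/

open MeasureTheory Filter Topology

/-- The integral of a function against a finite signed measure, defined via the Jordan
decomposition `ν = ν⁺ - ν⁻`. -/
noncomputable def signedIntegral {X : Type*} [MeasurableSpace X]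
    (ν : SignedMeasure X) (f : X → ℝ) : ℝ :=
  (∫ x, f x ∂ν.toJordanDecomposition.posPart) - ∫ x, f x ∂ν.toJordanDecomposition.negPart

section ContinuousTest

variable {X : Type*} [PseudoEMetricSpace X] [MeasurableSpace X]
  {μ p n : Measure X} [IsFiniteMeasure μ] [IsFiniteMeasure p] [IsFiniteMeasure n]

theorem sq_measureReal_sub_le_of_isClosed [OpensMeasurableSpace X]
    (h : ∀ f : C(X, ℝ), ((∫ x, f x ∂p) - ∫ x, f x ∂n) ^ 2 ≤ ∫ x, (f x) ^ 2 ∂μ)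
    {K : Set X} (hK : IsClosed K) : (p.real K - n.real K) ^ 2 ≤ μ.real K := by
  have hδ : ∀ k : ℕ, (0 : ℝ) < 1 / (k + 1) := fun _ ↦ Nat.one_div_pos_of_nat
  let f : ℕ → C(X, ℝ) := fun k ↦ ⟨fun x ↦ thickenedIndicator (hδ k) K x, by fun_prop⟩
  have hlim (ρ : Measure X) [IsFiniteMeasure ρ] :
      Tendsto (fun k ↦ ∫ x, f k x ∂ρ) atTop (𝓝 (ρ.real K)) :=
    tendsto_integral_thickenedIndicator_of_isClosed ρ hK hδ
      tendsto_one_div_add_atTop_nhds_zero_nat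
  refine le_of_tendsto_of_tendsto' (((hlim p).sub (hlim n)).pow 2) (hlim μ) fun k ↦ ?_
  have hsq_le : ∫ x, (f k x) ^ 2 ∂μ ≤ ∫ x, f k x ∂μ := by
    refine integral_mono_of_nonneg (ae_of_all _ fun x ↦ sq_nonneg _)
      (integrable_thickenedIndicator K (hδ k)) (ae_of_all _ fun x ↦ ?_)
    exact pow_le_of_le_one (NNReal.coe_nonneg _)
      (NNReal.coe_le_one.2 (thickenedIndicator_le_one _ K x)) two_ne_zero
  exact (h (f k)).trans hsq_le

theorem measure_eq_zero_of_sq_integral_sub_le_of_null [BorelSpace X]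
    (h : ∀ f : C(X, ℝ), ((∫ x, f x ∂p) - ∫ x, f x ∂n) ^ 2 ≤ ∫ x, (f x) ^ 2 ∂μ)
    {F : Set X} (hF : MeasurableSet F) (hμF : μ F = 0) (hnF : n F = 0) : p F = 0 := by
  rw [hF.measure_eq_iSup_isClosed_of_ne_top (measure_ne_top p F)]
  refine ENNReal.iSup_eq_zero.2 fun K ↦ ENNReal.iSup_eq_zero.2 fun hKF ↦
    ENNReal.iSup_eq_zero.2 fun hK ↦ ?_
  have hsq := sq_measureReal_sub_le_of_isClosed h hK
  rw [(measureReal_eq_zero_iff).2 (measure_mono_null hKF hnF),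
    (measureReal_eq_zero_iff).2 (measure_mono_null hKF hμF), sub_zero] at hsq
  exact (measureReal_eq_zero_iff).1
    (pow_eq_zero_iff two_ne_zero |>.1 (le_antisymm hsq (sq_nonneg _)))

theorem MeasureTheory.Measure.MutuallySingular.measure_eq_zero_of_sq_integral_sub_le
    [BorelSpace X] (hpn : p ⟂ₘ n)
    (h : ∀ f : C(X, ℝ), ((∫ x, f x ∂p) - ∫ x, f x ∂n) ^ 2 ≤ ∫ x, (f x) ^ 2 ∂μ)
    {E : Set X} (hE : MeasurableSet E) (hμE : μ E = 0) : p E = 0 := by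
  have hN := hpn.measurableSet_nullSet
  rw [← measure_inter_add_sdiff E hN,
    measure_mono_null Set.inter_subset_right hpn.measure_nullSet, zero_add]
  exact measure_eq_zero_of_sq_integral_sub_le_of_null h (hE.diff hN)
    (measure_mono_null Set.sdiff_subset hμE)
    (measure_mono_null (Set.sdiff_subset_compl _ _) hpn.measure_compl_nullSet)

end ContinuousTest

theorem stmt_10_general {X : Type*} [MetricSpace X] [MeasurableSpace X]
    [BorelSpace X] (μ : Measure X) [IsFiniteMeasure μ] (ν : SignedMeasure X)
    (h : ∀ f : C(X, ℝ), (signedIntegral ν (⇑f)) ^ 2 ≤ ∫ x, (f x) ^ 2 ∂μ) :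
    ∀ E : Set X, MeasurableSet E → μ E = 0 → ν.totalVariation E = 0 := by
  intro E hE hμE
  have hpn := ν.toJordanDecomposition.mutuallySingular
  have hp := hpn.measure_eq_zero_of_sq_integral_sub_le h hE hμE
  have hn := hpn.symm.measure_eq_zero_of_sq_integral_sub_le
    (fun f ↦ (sub_sq_comm _ _).trans_le (h f)) hE hμE
  rw [SignedMeasure.totalVariation, Measure.add_apply, hp, hn, add_zero]

/-- If `μ` is a finite nonnegative Borel measure and `ν` a finite signed Borel measure on a
compact metric space `X` such that `(∫ f dν)² ≤ ∫ f² dμ` for every continuous `f : X → ℝ`,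
then `ν` is absolutely continuous with respect to `μ`: the total variation `|ν|` vanishes
on every `μ`-null Borel set. -/
theorem stmt_10 {X : Type*} [MetricSpace X] [CompactSpace X] [MeasurableSpace X]
    [BorelSpace X] (μ : Measure X) [IsFiniteMeasure μ] (ν : SignedMeasure X)
    (h : ∀ f : C(X, ℝ), (signedIntegral ν (⇑f)) ^ 2 ≤ ∫ x, (f x) ^ 2 ∂μ) :
    ∀ E : Set X, MeasurableSet E → μ E = 0 → ν.totalVariation E = 0 :=
  stmt_10_general μ ν h
end
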